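/- (Truth lemma for the filtration) Let (W,R,V) be a model rooted at r, let φ be a modal formula with k := md(φ) and X := the set of propositional variables occurring in φ. Let W^f be the set of ≡-classes of W_{≤k} := {x : d_r(x) ≤ k}, where x ≡ y iff d_r(x) = d_r(y) and x ∼_{k−d_r(x)}^X y; let |x| R^f |y| iff d_r(x) = k, or (d_r(x) < k and d_r(y) ≤ d_r(x)+1 and ∃y' with x R y' and y' ∼_{k−d_r(x)−1}^X y); and let V^f(p) := {|x| : x ∈ V(p)} for p ∈ X. Then for every x ∈ W_{≤k} and every subformula ψ of φ with md(ψ) ≤ k − d_r(x): (W,R,V), x ⊨ ψ if and only if (W^f,R^f,V^f), |x| ⊨ ψ. In particular, if (W,R,V), r ⊨ φ then (W^f,R^f,V^f), |r| ⊨ φ. -/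
import Mathlib


/-- Modal formulas: ⊥, propositional variables, ¬, ∨, ◇. -/
inductive ModalFormula : Type
  | bot : ModalFormula
  | var : ℕ → ModalFormula
  | neg : ModalFormula → ModalFormula
  | or : ModalFormula → ModalFormula → ModalFormula
  | dia : ModalFormula → ModalFormula

namespace ModalFormula

/-- Modal depth: maximal nesting of ◇. -/
def md : ModalFormula → ℕ
  | bot => 0
  | var _ => 0
  | neg φ => md φ
  | or φ ψ => max (md φ) (md ψ)
  | dia φ => md φ + 1

/-- The set of propositional variables occurring in a formula. -/
def vars : ModalFormula → Set ℕ
  | bot => ∅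
  | var p => {p}
  | neg φ => vars φ
  | or φ ψ => vars φ ∪ vars ψ
  | dia φ => vars φ

/-- The set of subformulas of a formula (including the formula itself). -/
def subformulas : ModalFormula → Set ModalFormula
  | bot => {bot}
  | var p => {var p}
  | neg φ => insert (neg φ) (subformulas φ)
  | or φ ψ => insert (or φ ψ) (subformulas φ ∪ subformulas ψ)
  | dia φ => insert (dia φ) (subformulas φ)

end ModalFormula

/-- Standard Kripke satisfaction for a model given by a relation `R` and a valuation `V`. -/
def Sat {W : Type*} (R : W → W → Prop) (V : ℕ → Set W) : W → ModalFormula → Prop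
  | _, .bot => False
  | w, .var p => w ∈ V p
  | w, .neg φ => ¬ Sat R V w φ
  | w, .or φ ψ => Sat R V w φ ∨ Sat R V w ψ
  | w, .dia φ => ∃ v, R w v ∧ Sat R V v φ

/-- The `k`-step relation: `relPow R 0` is the identity, `relPow R (k+1) = relPow R k ∘ R`. -/
def relPow {W : Type*} (R : W → W → Prop) : ℕ → W → W → Prop
  | 0, x, y => x = y
  | k + 1, x, y => ∃ u, relPow R k x u ∧ R u y

/-- A frame is a `Φ`-frame if for every `(m,n) ∈ Φ`, `x R^m y` implies `x R^n y`. -/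
def PhiFrame {W : Type*} (R : W → W → Prop) (Φ : Set (ℕ × ℕ)) : Prop :=
  ∀ mn ∈ Φ, ∀ x y : W, relPow R mn.1 x y → relPow R mn.2 x y

/-- A pointed frame is rooted at `r` if every world is reachable from `r` in some number of steps. -/
def Rooted {W : Type*} (R : W → W → Prop) (r : W) : Prop :=
  ∀ w : W, ∃ k, relPow R k r w

/-- The depth of `w` w.r.t. `r`: the least `k` with `r R^k w`. -/
noncomputable def depth {W : Type*} (R : W → W → Prop) (r w : W) : ℕ :=
  sInf {k | relPow R k r w}

/-- `f` is a pointed p-morphism from `(W',R',r')` to `(W,R,r)`. -/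
def IsPMorphism {W' W : Type*} (R' : W' → W' → Prop) (r' : W')
    (R : W → W → Prop) (r : W) (f : W' → W) : Prop :=
  f r' = r ∧ (∀ x y, R' x y → R (f x) (f y)) ∧
    (∀ x y', R (f x) y' → ∃ y, R' x y ∧ f y = y')

/-- Bisimilarity of `x` (in model `(R,V)`) and `x'` (in model `(R',V')`). -/
def Bisim {W W' : Type*} (R : W → W → Prop) (V : ℕ → Set W)
    (R' : W' → W' → Prop) (V' : ℕ → Set W') (x : W) (x' : W') : Prop :=
  ∃ Z : W → W' → Prop, Z x x' ∧ ∀ w w', Z w w' →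
    (∀ p, w ∈ V p ↔ w' ∈ V' p) ∧
    (∀ v, R w v → ∃ v', R' w' v' ∧ Z v v') ∧
    (∀ v', R' w' v' → ∃ v, R w v ∧ Z v v')

/-- `k`-bisimilarity w.r.t. the set `X` of propositional variables. -/
def kBisim {W W' : Type*} (R : W → W → Prop) (V : ℕ → Set W)
    (R' : W' → W' → Prop) (V' : ℕ → Set W') (X : Set ℕ) :
    ℕ → W → W' → Prop
  | 0, w, w' => ∀ p ∈ X, (w ∈ V p ↔ w' ∈ V' p)
  | k + 1, w, w' => (∀ p ∈ X, (w ∈ V p ↔ w' ∈ V' p)) ∧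
      (∀ v, R w v → ∃ v', R' w' v' ∧ kBisim R V R' V' X k v v') ∧
      (∀ v', R' w' v' → ∃ v, R w v ∧ kBisim R V R' V' X k v v')

/-- `DepthPath R dep n x z` says there is an `n`-step `R`-path
`x R w₁ R ⋯ R w_{n-1} R z` whose intermediate points satisfy `dep (w_j) = dep x + j`. -/
def DepthPath {W : Type*} (R : W → W → Prop) (dep : W → ℕ) (n : ℕ) (x z : W) : Prop :=
  ∃ w : ℕ → W, w 0 = x ∧ w n = z ∧ (∀ j < n, R (w j) (w (j + 1))) ∧
    ∀ j, 0 < j → j < n → dep (w j) = dep x + j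

/-- The domain of the filtration: worlds of depth at most `k`. -/
def DepthLE (W : Type*) (R : W → W → Prop) (r : W) (k : ℕ) := {w : W // depth R r w ≤ k}

/-- The filtration equivalence `x ≡ y iff d(x) = d(y) and x ∼_{k-d(x)} y`. -/
def FilEquiv {W : Type*} (R : W → W → Prop) (V : ℕ → Set W) (r : W) (X : Set ℕ) (k : ℕ)
    (x y : DepthLE W R r k) : Prop :=
  depth R r x.1 = depth R r y.1 ∧ kBisim R V R V X (k - depth R r x.1) x.1 y.1

/-- The condition `C(x,y)`: `d(x) = k`, or `d(x) < k`, `d(y) ≤ d(x)+1`, and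
there is `y'` with `x R y'` and `y' ∼_{k-d(x)-1} y`. -/
def FilC {W : Type*} (R : W → W → Prop) (V : ℕ → Set W) (r : W) (X : Set ℕ) (k : ℕ)
    (x y : W) : Prop :=
  depth R r x = k ∨ (depth R r x < k ∧ depth R r y ≤ depth R r x + 1 ∧
    ∃ y', R x y' ∧ kBisim R V R V X (k - depth R r x - 1) y' y)

/-- The filtrated relation `R^f` on equivalence classes: `|x| R^f |y|` iff `C(x,y)`. -/
def FilRel {W : Type*} (R : W → W → Prop) (V : ℕ → Set W) (r : W) (X : Set ℕ) (k : ℕ)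
    (a c : Quot (FilEquiv R V r X k)) : Prop :=
  ∃ x z : DepthLE W R r k, a = Quot.mk _ x ∧ c = Quot.mk _ z ∧ FilC R V r X k x.1 z.1

/-- The filtrated valuation `V^f(p) = {|x| : x ∈ V(p)}`. -/
def FilVal {W : Type*} (R : W → W → Prop) (V : ℕ → Set W) (r : W) (X : Set ℕ) (k : ℕ)
    (p : ℕ) : Set (Quot (FilEquiv R V r X k)) :=
  {a | ∃ x : DepthLE W R r k, a = Quot.mk _ x ∧ x.1 ∈ V p}


section Aux

variable {W W' W'' : Type*}

lemma mem_subformulas_self (φ : ModalFormula) : φ ∈ φ.subformulas := by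
  cases φ <;> simp [ModalFormula.subformulas]

lemma subformulas_trans : ∀ φ ψ χ : ModalFormula,
    ψ ∈ φ.subformulas → χ ∈ ψ.subformulas → χ ∈ φ.subformulas := by
  intro φ
  induction φ with
  | bot => intro ψ χ h h'; simp [ModalFormula.subformulas] at h; subst h; exact h'
  | var p => intro ψ χ h h'; simp [ModalFormula.subformulas] at h; subst h; exact h'
  | neg φ ih =>
    intro ψ χ h h'
    simp [ModalFormula.subformulas] at h ⊢
    rcases h with h | h
    · subst h; simpa [ModalFormula.subformulas] using h'
    · exact Or.inr (ih ψ χ h h')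
  | or φ₁ φ₂ ih₁ ih₂ =>
    intro ψ χ h h'
    simp [ModalFormula.subformulas] at h ⊢
    rcases h with h | h | h
    · subst h; simpa [ModalFormula.subformulas] using h'
    · exact Or.inr (Or.inl (ih₁ ψ χ h h'))
    · exact Or.inr (Or.inr (ih₂ ψ χ h h'))
  | dia φ ih =>
    intro ψ χ h h'
    simp [ModalFormula.subformulas] at h ⊢
    rcases h with h | h
    · subst h; simpa [ModalFormula.subformulas] using h'
    · exact Or.inr (ih ψ χ h h')

lemma vars_mono : ∀ φ ψ : ModalFormula, ψ ∈ φ.subformulas → ψ.vars ⊆ φ.vars := by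
  intro φ
  induction φ with
  | bot => intro ψ h; simp [ModalFormula.subformulas] at h; subst h; exact subset_rfl
  | var p => intro ψ h; simp [ModalFormula.subformulas] at h; subst h; exact subset_rfl
  | neg φ ih =>
    intro ψ h
    simp [ModalFormula.subformulas] at h
    rcases h with h | h
    · subst h; exact subset_rfl
    · exact ih ψ h
  | or φ₁ φ₂ ih₁ ih₂ =>
    intro ψ h
    simp [ModalFormula.subformulas] at h
    rcases h with h | h | h
    · subst h; exact subset_rfl
    · exact (ih₁ ψ h).trans Set.subset_union_left
    · exact (ih₂ ψ h).trans Set.subset_union_right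
  | dia φ ih =>
    intro ψ h
    simp [ModalFormula.subformulas] at h
    rcases h with h | h
    · subst h; exact subset_rfl
    · exact ih ψ h

lemma kBisim_atom {R : W → W → Prop} {V : ℕ → Set W} {R' : W' → W' → Prop} {V' : ℕ → Set W'}
    {X : Set ℕ} : ∀ n w w', kBisim R V R' V' X n w w' → ∀ p ∈ X, (w ∈ V p ↔ w' ∈ V' p) := by
  intro n w w' h
  cases n with
  | zero => exact h
  | succ n => exact h.1

lemma kBisim_refl {R : W → W → Prop} {V : ℕ → Set W} {X : Set ℕ} :
    ∀ n (w : W), kBisim R V R V X n w w := by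
  intro n
  induction n with
  | zero => intro w p _; rfl
  | succ n ih =>
    intro w
    exact ⟨fun p _ => Iff.rfl, fun v hv => ⟨v, hv, ih v⟩, fun v hv => ⟨v, hv, ih v⟩⟩

lemma kBisim_symm {R : W → W → Prop} {V : ℕ → Set W} {R' : W' → W' → Prop} {V' : ℕ → Set W'}
    {X : Set ℕ} : ∀ n w w', kBisim R V R' V' X n w w' → kBisim R' V' R V X n w' w := by
  intro n
  induction n with
  | zero => intro w w' h p hp; exact (h p hp).symm
  | succ n ih =>
    intro w w' h
    refine ⟨fun p hp => (h.1 p hp).symm, fun v hv => ?_, fun v hv => ?_⟩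
    · obtain ⟨u, hu, hb⟩ := h.2.2 v hv; exact ⟨u, hu, ih _ _ hb⟩
    · obtain ⟨u, hu, hb⟩ := h.2.1 v hv; exact ⟨u, hu, ih _ _ hb⟩

lemma kBisim_trans {R : W → W → Prop} {V : ℕ → Set W} {R' : W' → W' → Prop} {V' : ℕ → Set W'}
    {R'' : W'' → W'' → Prop} {V'' : ℕ → Set W''} {X : Set ℕ} :
    ∀ n w w' w'', kBisim R V R' V' X n w w' → kBisim R' V' R'' V'' X n w' w'' →
      kBisim R V R'' V'' X n w w'' := by
  intro n
  induction n with
  | zero => intro w w' w'' h h' p hp; exact (h p hp).trans (h' p hp)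
  | succ n ih =>
    intro w w' w'' h h'
    refine ⟨fun p hp => (h.1 p hp).trans (h'.1 p hp), fun v hv => ?_, fun v hv => ?_⟩
    · obtain ⟨u, hu, hb⟩ := h.2.1 v hv
      obtain ⟨u', hu', hb'⟩ := h'.2.1 u hu
      exact ⟨u', hu', ih _ _ _ hb hb'⟩
    · obtain ⟨u, hu, hb⟩ := h'.2.2 v hv
      obtain ⟨u', hu', hb'⟩ := h.2.2 u hu
      exact ⟨u', hu', ih _ _ _ hb' hb⟩

lemma kBisim_mono {R : W → W → Prop} {V : ℕ → Set W} {R' : W' → W' → Prop} {V' : ℕ → Set W'}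
    {X : Set ℕ} : ∀ m n w w', m ≤ n → kBisim R V R' V' X n w w' → kBisim R V R' V' X m w w' := by
  intro m
  induction m with
  | zero => intro n w w' _ h; exact kBisim_atom n w w' h
  | succ m ih =>
    intro n w w' hmn h
    obtain ⟨n, rfl⟩ : ∃ n', n = n' + 1 := ⟨n - 1, by omega⟩
    refine ⟨h.1, fun v hv => ?_, fun v hv => ?_⟩
    · obtain ⟨u, hu, hb⟩ := h.2.1 v hv
      exact ⟨u, hu, ih n _ _ (by omega) hb⟩
    · obtain ⟨u, hu, hb⟩ := h.2.2 v hv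
      exact ⟨u, hu, ih n _ _ (by omega) hb⟩

lemma kBisim_sat {R : W → W → Prop} {V : ℕ → Set W} {R' : W' → W' → Prop} {V' : ℕ → Set W'}
    {X : Set ℕ} : ∀ (ψ : ModalFormula), ψ.vars ⊆ X → ∀ n w w', ψ.md ≤ n →
      kBisim R V R' V' X n w w' → (Sat R V w ψ ↔ Sat R' V' w' ψ) := by
  intro ψ
  induction ψ with
  | bot => intro _ n w w' _ _; exact Iff.rfl
  | var p =>
    intro hv n w w' _ h
    exact kBisim_atom n w w' h p (hv rfl)
  | neg ψ ih =>
    intro hv n w w' hmd h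
    have := ih hv n w w' hmd h
    simp only [Sat]; tauto
  | or ψ₁ ψ₂ ih₁ ih₂ =>
    intro hv n w w' hmd h
    simp only [ModalFormula.md, max_le_iff] at hmd
    simp only [ModalFormula.vars, Set.union_subset_iff] at hv
    have h1 := ih₁ hv.1 n w w' hmd.1 h
    have h2 := ih₂ hv.2 n w w' hmd.2 h
    simp only [Sat]; tauto
  | dia ψ ih =>
    intro hv n w w' hmd h
    simp only [ModalFormula.md] at hmd
    have h' : kBisim R V R' V' X (ψ.md + 1) w w' := kBisim_mono _ n w w' hmd h
    constructor
    · rintro ⟨v, hwv, hs⟩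
      obtain ⟨u, hu, hb⟩ := h'.2.1 v hwv
      exact ⟨u, hu, (ih hv ψ.md v u le_rfl hb).mp hs⟩
    · rintro ⟨v, hwv, hs⟩
      obtain ⟨u, hu, hb⟩ := h'.2.2 v hwv
      exact ⟨u, hu, (ih hv ψ.md u v le_rfl hb).mpr hs⟩

lemma filEquiv_equivalence {R : W → W → Prop} {V : ℕ → Set W} {r : W} {X : Set ℕ} {k : ℕ} :
    Equivalence (FilEquiv R V r X k) := by
  constructor
  · intro x; exact ⟨rfl, kBisim_refl _ _⟩
  · intro x y h
    refine ⟨h.1.symm, ?_⟩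
    rw [← h.1]
    exact kBisim_symm _ _ _ h.2
  · intro x y z h h'
    refine ⟨h.1.trans h'.1, kBisim_trans _ _ _ _ h.2 ?_⟩
    rw [h.1]
    exact h'.2

lemma filEquiv_of_quot_eq {R : W → W → Prop} {V : ℕ → Set W} {r : W} {X : Set ℕ} {k : ℕ}
    {x y : DepthLE W R r k} (h : Quot.mk (FilEquiv R V r X k) x = Quot.mk _ y) :
    FilEquiv R V r X k x y :=
  (filEquiv_equivalence.eqvGen_iff).mp (Quot.eq.mp h)

lemma relPow_depth {R : W → W → Prop} {r : W} (hRoot : Rooted R r) (w : W) :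
    relPow R (depth R r w) r w :=
  Nat.sInf_mem (hRoot w)

lemma depth_le_succ {R : W → W → Prop} {r : W} (hRoot : Rooted R r) {x y : W} (h : R x y) :
    depth R r y ≤ depth R r x + 1 :=
  Nat.sInf_le ⟨x, relPow_depth hRoot x, h⟩

lemma depth_self {R : W → W → Prop} {r : W} : depth R r r = 0 :=
  Nat.le_zero.mp (Nat.sInf_le (by exact rfl))

lemma truth_aux {R : W → W → Prop} {V : ℕ → Set W} {r : W} (hRoot : Rooted R r)
    (X : Set ℕ) (k : ℕ) :
    ∀ ψ : ModalFormula, ψ.vars ⊆ X → ∀ x : DepthLE W R r k, ψ.md ≤ k - depth R r x.1 →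
      (Sat R V x.1 ψ ↔ Sat (FilRel R V r X k) (FilVal R V r X k) (Quot.mk _ x) ψ) := by
  intro ψ
  induction ψ with
  | bot => intro _ x _; exact Iff.rfl
  | var p =>
    intro hv x _
    constructor
    · intro h; exact ⟨x, rfl, h⟩
    · rintro ⟨y, hq, hy⟩
      have he := filEquiv_of_quot_eq hq.symm
      exact (kBisim_atom _ _ _ he.2 p (hv rfl)).mp hy
  | neg ψ ih =>
    intro hv x hmd
    have := ih hv x hmd
    simp only [Sat]; tauto
  | or ψ₁ ψ₂ ih₁ ih₂ =>
    intro hv x hmd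
    simp only [ModalFormula.md, max_le_iff] at hmd
    simp only [ModalFormula.vars, Set.union_subset_iff] at hv
    have h1 := ih₁ hv.1 x hmd.1
    have h2 := ih₂ hv.2 x hmd.2
    simp only [Sat]; tauto
  | dia ψ ih =>
    intro hv x hmd
    simp only [ModalFormula.md] at hmd
    have hdx : depth R r x.1 < k := by omega
    have hψ : ψ.md ≤ k - depth R r x.1 - 1 := by omega
    constructor
    · rintro ⟨v, hxv, hs⟩
      have hdv : depth R r v ≤ depth R r x.1 + 1 := depth_le_succ hRoot hxv
      have hdvk : depth R r v ≤ k := by omega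
      refine ⟨Quot.mk _ (⟨v, hdvk⟩ : DepthLE W R r k),
        ⟨x, ⟨v, hdvk⟩, rfl, rfl, Or.inr ⟨hdx, hdv, v, hxv, kBisim_refl _ _⟩⟩, ?_⟩
      exact (ih hv ⟨v, hdvk⟩ (show ψ.md ≤ k - depth R r v by omega)).mp hs
    · rintro ⟨c, ⟨x₀, z, hq, rfl, hC⟩, hs⟩
      have he := filEquiv_of_quot_eq hq.symm
      have hd0 : depth R r x₀.1 = depth R r x.1 := he.1
      rcases hC with h | ⟨_, hdz, y', hx₀y', hb⟩
      · omega
      have hbx : kBisim R V R V X (k - depth R r x.1 - 1 + 1) x₀.1 x.1 := by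
        have := he.2
        rw [hd0] at this
        exact kBisim_mono _ _ _ _ (by omega) this
      obtain ⟨v, hxv, hbv⟩ := hbx.2.1 y' hx₀y'
      have hb' : kBisim R V R V X (k - depth R r x.1 - 1) y' z.1 := by
        rw [← hd0]; rw [hd0] at hb ⊢; exact hb
      have hvz : kBisim R V R V X (k - depth R r x.1 - 1) v z.1 :=
        kBisim_trans _ _ _ _ (kBisim_symm _ _ _ hbv) hb'
      have hsz : Sat R V z.1 ψ := by
        refine (ih hv z ?_).mpr hs
        have : depth R r z.1 ≤ depth R r x.1 + 1 := by omega
        omega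
      exact ⟨v, hxv, (kBisim_sat ψ hv _ v z.1 hψ hvz).mpr hsz⟩

end Aux

/-- Truth lemma for the filtration: for `x ∈ W_{≤k}` and subformulas `ψ` of `φ` with
`md(ψ) ≤ k - d(x)`, truth at `x` and at `|x|` coincide; in particular `φ` transfers
from the root. Here `k = md(φ)` and `X = vars(φ)`. -/
theorem statement14 {W : Type*} (R : W → W → Prop) (V : ℕ → Set W) (r : W)
    (hRoot : Rooted R r) (φ : ModalFormula) :
    (∀ x : DepthLE W R r φ.md, ∀ ψ ∈ φ.subformulas, ψ.md ≤ φ.md - depth R r x.1 →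
      (Sat R V x.1 ψ ↔
        Sat (FilRel R V r φ.vars φ.md) (FilVal R V r φ.vars φ.md)
          (Quot.mk (FilEquiv R V r φ.vars φ.md) x) ψ)) ∧
    (∀ hr : depth R r r ≤ φ.md, Sat R V r φ →
      Sat (FilRel R V r φ.vars φ.md) (FilVal R V r φ.vars φ.md)
        (Quot.mk (FilEquiv R V r φ.vars φ.md) ⟨r, hr⟩) φ) := by
  constructor
  · intro x ψ hψ hmd
    exact truth_aux hRoot φ.vars φ.md ψ (vars_mono φ ψ hψ) x hmd
  · intro hr hsat
    refine (truth_aux hRoot φ.vars φ.md φ subset_rfl ⟨r, hr⟩ ?_).mp hsat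
    simp [depth_self]
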